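/- arXiv:2207.12076 — 3 statements merged into one kernel-verified Lean document; each statement's English description precedes it below -/
import Mathlib

section
/- Let E ⊆ ℝⁿ be an open set, let b be a constant real n×n matrix with bᵀ = −b, let u : E → ℝ be continuously differentiable on E, and let φ : ℝⁿ → ℝ be smooth with compact support contained in E. Then ∫_E (b ∇u(Y)) · ∇φ(Y) dY = 0. -/
/-!
Since `bᵀ = -b`, `(b∇u)·∇φ = -∇u·(b∇φ)`. The field `V = b∇φ` is `C¹`, supported in
`tsupport φ ⊆ E`, and divergence free, because `div V = ∑ᵢⱼ bⱼᵢ ∂ⱼ∂ᵢφ` pairs an antisymmetric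
matrix with the symmetric Hessian. Integrating by parts, which only needs `u` to be `C¹` near the
support of `V`, gives `∫ ∇u·V = -∫ u div V = 0`.
-/

open MeasureTheory Metric Set
open scoped ENNReal

noncomputable section

/-- The gradient of `u : ℝⁿ → ℝ`, as the vector of partial derivatives. -/
def grad {n : ℕ} (u : EuclideanSpace ℝ (Fin n) → ℝ) (x : EuclideanSpace ℝ (Fin n)) :
    Fin n → ℝ :=
  fun i => fderiv ℝ u x (EuclideanSpace.single i 1)

/-- Euclidean dot product on `ℝⁿ`. -/
def dotp {n : ℕ} (v w : Fin n → ℝ) : ℝ := ∑ i, v i * w i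

/-- Matrix–vector product. -/
def matVec {n : ℕ} (A : Fin n → Fin n → ℝ) (v : Fin n → ℝ) : Fin n → ℝ :=
  fun i => ∑ j, A i j * v j

theorem integrable_mul_of_continuousOn_of_tsupport_subset {X : Type*} [TopologicalSpace X]
    [MeasurableSpace X] [OpensMeasurableSpace X] {μ : Measure X} [IsFiniteMeasureOnCompacts μ]
    {U : Set X} {f g : X → ℝ} (hU : IsOpen U) (hf : ContinuousOn f U) (hg : Continuous g)
    (hgc : HasCompactSupport g) (hgU : tsupport g ⊆ U) :
    Integrable (fun x => f x * g x) μ :=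
  ((hf.mul hg.continuousOn).continuous_of_tsupport_subset hU
    (tsupport_mul_subset_right.trans hgU)).integrable_of_hasCompactSupport hgc.mul_left

section IntegrationByParts

variable {F : Type*} [NormedAddCommGroup F] [NormedSpace ℝ F] [MeasurableSpace F] [BorelSpace F]
  {μ : Measure F} {U : Set F} {f g : F → ℝ}

theorem integrable_fderiv_apply_mul_of_contDiffOn [IsFiniteMeasureOnCompacts μ] (hU : IsOpen U)
    (hf : ContDiffOn ℝ 1 f U) (hg : Continuous g) (hgc : HasCompactSupport g)
    (hgU : tsupport g ⊆ U) (v : F) :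
    Integrable (fun x => fderiv ℝ f x v * g x) μ :=
  integrable_mul_of_continuousOn_of_tsupport_subset hU
    ((hf.continuousOn_fderiv_of_isOpen hU le_rfl).clm_apply continuousOn_const) hg hgc hgU

theorem integrable_mul_fderiv_apply_of_contDiff [IsFiniteMeasureOnCompacts μ] (hU : IsOpen U)
    (hf : ContinuousOn f U) (hg : ContDiff ℝ 1 g) (hgc : HasCompactSupport g)
    (hgU : tsupport g ⊆ U) (v : F) :
    Integrable (fun x => f x * fderiv ℝ g x v) μ :=
  integrable_mul_of_continuousOn_of_tsupport_subset hU hf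
    ((hg.continuous_fderiv one_ne_zero).clm_apply continuous_const) (hgc.fderiv_apply ℝ v)
    ((tsupport_fderiv_apply_subset ℝ v).trans hgU)

theorem integral_fderiv_apply_mul_eq_neg_integral_mul_fderiv_apply [FiniteDimensional ℝ F]
    [μ.IsAddHaarMeasure] (hU : IsOpen U) (hf : ContDiffOn ℝ 1 f U) (hg : ContDiff ℝ 1 g)
    (hgc : HasCompactSupport g) (hgU : tsupport g ⊆ U) (v : F) :
    ∫ x, fderiv ℝ f x v * g x ∂μ = -∫ x, f x * fderiv ℝ g x v ∂μ := by
  rw [integral_mul_fderiv_eq_neg_fderiv_mul_of_integrable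
    (integrable_fderiv_apply_mul_of_contDiffOn hU hf hg.continuous hgc hgU v)
    (integrable_mul_fderiv_apply_of_contDiff hU hf.continuousOn hg hgc hgU v)
    (integrable_mul_of_continuousOn_of_tsupport_subset hU hf.continuousOn hg.continuous hgc hgU)
    (fun x hx => (hf.contDiffAt (hU.mem_nhds (hgU hx))).differentiableAt one_ne_zero)
    (fun x _ => hg.differentiable one_ne_zero x), neg_neg]

end IntegrationByParts

theorem sum_sum_mul_eq_zero_of_antisymm_of_symm {ι : Type*} [Fintype ι] {b S : ι → ι → ℝ}
    (hb : ∀ i j, b j i = -b i j) (hS : ∀ i j, S j i = S i j) :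
    ∑ i, ∑ j, b i j * S i j = 0 := by
  have h : ∑ i, ∑ j, b i j * S i j = ∑ i, ∑ j, -(b i j * S i j) := by
    rw [Finset.sum_comm]
    exact Finset.sum_congr rfl fun i _ => Finset.sum_congr rfl fun j _ => by rw [hb, hS]; ring
  simp only [Finset.sum_neg_distrib] at h
  linarith

theorem dotp_matVec_of_antisymm {n : ℕ} {b : Fin n → Fin n → ℝ} (hb : ∀ i j, b j i = -b i j)
    (v w : Fin n → ℝ) : dotp (matVec b v) w = -dotp v (matVec b w) := by
  simp only [dotp, matVec, Finset.sum_mul, Finset.mul_sum, ← Finset.sum_neg_distrib]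
  rw [Finset.sum_comm]
  exact Finset.sum_congr rfl fun i _ => Finset.sum_congr rfl fun j _ => by rw [hb]; ring

theorem grad_eq_zero_of_notMem_tsupport {n : ℕ} {φ : EuclideanSpace ℝ (Fin n) → ℝ}
    {x : EuclideanSpace ℝ (Fin n)} (hx : x ∉ tsupport φ) : grad φ x = 0 := by
  funext i
  simp [grad, fderiv_of_notMem_tsupport ℝ hx]

def divergence {n : ℕ} (V : Fin n → EuclideanSpace ℝ (Fin n) → ℝ)
    (x : EuclideanSpace ℝ (Fin n)) : ℝ :=
  ∑ j, grad (V j) x j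

theorem integral_dotp_grad_eq_neg_integral_mul_divergence {n : ℕ}
    {E : Set (EuclideanSpace ℝ (Fin n))} (hE : IsOpen E) {u : EuclideanSpace ℝ (Fin n) → ℝ}
    (hu : ContDiffOn ℝ 1 u E) {V : Fin n → EuclideanSpace ℝ (Fin n) → ℝ}
    (hV : ∀ j, ContDiff ℝ 1 (V j)) (hVc : ∀ j, HasCompactSupport (V j))
    (hVE : ∀ j, tsupport (V j) ⊆ E) :
    ∫ x, dotp (grad u x) (fun j => V j x) = -∫ x, u x * divergence V x := by
  simp only [dotp, divergence, grad, Finset.mul_sum]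
  rw [integral_finsetSum _ fun j _ => integrable_fderiv_apply_mul_of_contDiffOn hE hu
      (hV j).continuous (hVc j) (hVE j) _,
    integral_finsetSum _ fun j _ => integrable_mul_fderiv_apply_of_contDiff hE hu.continuousOn
      (hV j) (hVc j) (hVE j) _,
    ← Finset.sum_neg_distrib]
  exact Finset.sum_congr rfl fun j _ =>
    integral_fderiv_apply_mul_eq_neg_integral_mul_fderiv_apply hE hu (hV j) (hVc j) (hVE j) _

section MatVecGrad

variable {n : ℕ} {φ : EuclideanSpace ℝ (Fin n) → ℝ}

theorem contDiff_matVec_grad (b : Fin n → Fin n → ℝ) (hφ : ContDiff ℝ 2 φ) (j : Fin n) :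
    ContDiff ℝ 1 (fun x => matVec b (grad φ x) j) :=
  ContDiff.sum fun i _ => contDiff_const.mul
    ((hφ.fderiv_right (m := 1) (by norm_num)).clm_apply contDiff_const)

theorem tsupport_matVec_grad_subset (b : Fin n → Fin n → ℝ) (j : Fin n) :
    tsupport (fun x => matVec b (grad φ x) j) ⊆ tsupport φ :=
  closure_minimal (fun x hx => by_contra fun h => hx (by
    simp [grad_eq_zero_of_notMem_tsupport h, matVec])) (isClosed_tsupport φ)

theorem divergence_matVec_grad_eq_zero {b : Fin n → Fin n → ℝ} (hb : ∀ i j, b j i = -b i j)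
    (hφ : ContDiff ℝ 2 φ) (x : EuclideanSpace ℝ (Fin n)) :
    divergence (fun j y => matVec b (grad φ y) j) x = 0 := by
  set e : Fin n → EuclideanSpace ℝ (Fin n) := fun i => EuclideanSpace.single i 1
  have hφ' : DifferentiableAt ℝ (fderiv ℝ φ) x :=
    (hφ.fderiv_right (m := 1) (by norm_num)).differentiable one_ne_zero x
  have hpartial : ∀ j, grad (fun y => matVec b (grad φ y) j) x j
      = ∑ i, b j i * fderiv ℝ (fderiv ℝ φ) x (e j) (e i) := by
    intro j
    have hd : ∀ i, DifferentiableAt ℝ (fun y => fderiv ℝ φ y (e i)) x :=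
      fun i => hφ'.clm_apply (differentiableAt_const _)
    simp only [grad, matVec]
    rw [fderiv_fun_sum fun i _ => (hd i).const_mul _]
    simp [fderiv_const_mul (hd _), fderiv_clm_apply hφ' (differentiableAt_const _), e]
  simp only [divergence, hpartial]
  exact sum_sum_mul_eq_zero_of_antisymm_of_symm hb fun i j =>
    (hφ.contDiffAt.isSymmSndFDerivAt (by simp)) (e j) (e i)

end MatVecGrad

theorem statement0_general
    (n : ℕ)
    (E : Set (EuclideanSpace ℝ (Fin n))) (hE : IsOpen E)
    (b : Fin n → Fin n → ℝ) (hb : ∀ i j, b j i = - b i j)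
    (u : EuclideanSpace ℝ (Fin n) → ℝ) (hu : ContDiffOn ℝ 1 u E)
    (φ : EuclideanSpace ℝ (Fin n) → ℝ) (hφ : ContDiff ℝ (⊤ : ℕ∞) φ)
    (hφc : HasCompactSupport φ) (hφs : tsupport φ ⊆ E) :
    ∫ Y in E, dotp (matVec b (grad u Y)) (grad φ Y) = 0 := by
  have hφ2 : ContDiff ℝ 2 φ := hφ.of_le (WithTop.coe_le_coe.mpr le_top)
  set V : Fin n → EuclideanSpace ℝ (Fin n) → ℝ := fun j Y => matVec b (grad φ Y) j
  have hVφ : ∀ j, tsupport (V j) ⊆ tsupport φ := tsupport_matVec_grad_subset b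
  calc ∫ Y in E, dotp (matVec b (grad u Y)) (grad φ Y)
      = ∫ Y, dotp (matVec b (grad u Y)) (grad φ Y) :=
        setIntegral_eq_integral_of_forall_compl_eq_zero fun Y hY => by
          simp [grad_eq_zero_of_notMem_tsupport fun h => hY (hφs h), dotp]
    _ = -∫ Y, dotp (grad u Y) (fun j => V j Y) := by
        simp only [dotp_matVec_of_antisymm hb, integral_neg, V]
    _ = ∫ Y, u Y * divergence V Y := by
        rw [integral_dotp_grad_eq_neg_integral_mul_divergence hE hu (contDiff_matVec_grad b hφ2)
          (fun j => hφc.of_isClosed_subset (isClosed_tsupport _) (hVφ j))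
          (fun j => (hVφ j).trans hφs), neg_neg]
    _ = 0 := by simp [V, divergence_matVec_grad_eq_zero hb hφ2]

/-- for a constant antisymmetric matrix `b`, a `C¹` function `u` on an open
set `E` and a smooth `φ` compactly supported in `E`, one has `∫_E (b∇u)·∇φ = 0`. -/
theorem statement0
    (n : ℕ) (hn : 1 ≤ n)
    (E : Set (EuclideanSpace ℝ (Fin n))) (hE : IsOpen E)
    (b : Fin n → Fin n → ℝ) (hb : ∀ i j, b j i = - b i j)
    (u : EuclideanSpace ℝ (Fin n) → ℝ) (hu : ContDiffOn ℝ 1 u E)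
    (φ : EuclideanSpace ℝ (Fin n) → ℝ) (hφ : ContDiff ℝ (⊤ : ℕ∞) φ)
    (hφc : HasCompactSupport φ) (hφs : tsupport φ ⊆ E) :
    ∫ Y in E, dotp (matVec b (grad u Y)) (grad φ Y) = 0 :=
  statement0_general n E hE b hb u hu φ hφ hφc hφs
end
end

section
/- Let B ⊆ ℝⁿ be an open ball, λ₀ > 0 and r > 2. Let Â, A₁ : B → ℝ^{n×n} be measurable with λ₀‖ξ‖² ≤ ξ · (Â(Y)ξ) for almost every Y ∈ B and all ξ ∈ ℝⁿ, and with Â − A₁ ∈ L^r(B). Let u, û : B → ℝ be C¹ functions with ∇u ∈ L^{2r/(r−2)}(B), such that w := û − u is C¹ with compact support contained in B, such that ∫_B (A₁∇u)·∇ϕ = 0 and ∫_B (Â∇û)·∇ϕ = 0 for every C¹ function ϕ with compact support in B, and such that (Â∇û)·∇w, (Â∇u)·∇w and (A₁∇u)·∇w are integrable on B. Then ( ∫_B ‖∇(û − u)‖² )^{1/2} ≤ λ₀^{-1} ‖Â − A₁‖_{L^r(B)} ‖∇u‖_{L^{2r/(r−2)}(B)}. -/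
/-!
Test both weak formulations with `w = û - u`. Ellipticity and the equation for `û` give
`λ₀ ‖∇w‖₂² ≤ ∫ Â∇w·∇w = -∫ Â∇u·∇w`, and subtracting the equation for `u` turns the right side
into `-∫ (Â - A₁)∇u·∇w`. Hölder's inequality with the three exponents `r`, `2r/(r-2)`, `2`
bounds this by `‖Â - A₁‖_r ‖∇u‖_{2r/(r-2)} ‖∇w‖₂`; dividing by `λ₀ ‖∇w‖₂` gives the estimate.
-/

open MeasureTheory Metric Set
open scoped ENNReal

noncomputable section

/-- Euclidean norm of a vector in `ℝⁿ`. -/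
def vnorm {n : ℕ} (v : Fin n → ℝ) : ℝ := Real.sqrt (∑ i, v i ^ 2)

/-- A fixed norm on `n × n` real matrices (the Frobenius norm). -/
def mnorm {n : ℕ} (M : Fin n → Fin n → ℝ) : ℝ := Real.sqrt (∑ i, ∑ j, (M i j) ^ 2)

theorem dotp_comm {n : ℕ} (v w : Fin n → ℝ) : dotp v w = dotp w v := dotProduct_comm v w

theorem sub_dotp {n : ℕ} (a b g : Fin n → ℝ) : dotp (a - b) g = dotp a g - dotp b g :=
  sub_dotProduct a b g

theorem sub_matVec {n : ℕ} (M N : Fin n → Fin n → ℝ) (v : Fin n → ℝ) :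
    matVec (M - N) v = matVec M v - matVec N v :=
  Matrix.sub_mulVec M N v

theorem matVec_sub {n : ℕ} (M : Fin n → Fin n → ℝ) (v w : Fin n → ℝ) :
    matVec M (v - w) = matVec M v - matVec M w :=
  Matrix.mulVec_sub M v w

theorem vnorm_nonneg {n : ℕ} (v : Fin n → ℝ) : 0 ≤ vnorm v := Real.sqrt_nonneg _

theorem mnorm_nonneg {n : ℕ} (M : Fin n → Fin n → ℝ) : 0 ≤ mnorm M := Real.sqrt_nonneg _

theorem vnorm_sq {n : ℕ} (v : Fin n → ℝ) : vnorm v ^ 2 = ∑ i, v i ^ 2 :=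
  Real.sq_sqrt (by positivity)

theorem continuous_vnorm {n : ℕ} : Continuous (vnorm : (Fin n → ℝ) → ℝ) := by
  unfold vnorm; fun_prop

theorem abs_dotp_le {n : ℕ} (v w : Fin n → ℝ) : |dotp v w| ≤ vnorm v * vnorm w := by
  rw [← Real.sqrt_sq_eq_abs, vnorm, vnorm, ← Real.sqrt_mul (by positivity)]
  exact Real.sqrt_le_sqrt (Finset.sum_mul_sq_le_sq_mul_sq _ v w)

theorem vnorm_matVec_le {n : ℕ} (M : Fin n → Fin n → ℝ) (v : Fin n → ℝ) :
    vnorm (matVec M v) ≤ mnorm M * vnorm v := by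
  rw [vnorm, vnorm, mnorm, ← Real.sqrt_mul (by positivity), Finset.sum_mul]
  exact Real.sqrt_le_sqrt (Finset.sum_le_sum fun i _ => Finset.sum_mul_sq_le_sq_mul_sq _ (M i) v)

theorem abs_dotp_matVec_le {n : ℕ} (M : Fin n → Fin n → ℝ) (v g : Fin n → ℝ) :
    |dotp (matVec M v) g| ≤ mnorm M * vnorm v * vnorm g :=
  (abs_dotp_le _ _).trans (by gcongr; exacts [vnorm_nonneg g, vnorm_matVec_le M v])

section Gradient

variable {n : ℕ}

theorem grad_sub {u v : EuclideanSpace ℝ (Fin n) → ℝ} {x : EuclideanSpace ℝ (Fin n)}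
    (hu : DifferentiableAt ℝ u x) (hv : DifferentiableAt ℝ v x) :
    grad (fun z => u z - v z) x = grad u x - grad v x := by
  ext i
  simp only [grad, fderiv_fun_sub hu hv, Pi.sub_apply, sub_apply]

theorem grad_sub_of_contDiffOn {u v : EuclideanSpace ℝ (Fin n) → ℝ}
    {s : Set (EuclideanSpace ℝ (Fin n))} (hs : IsOpen s) (hu : ContDiffOn ℝ 1 u s) (hvu : ContDiff ℝ 1 fun z => v z - u z)
    {x : EuclideanSpace ℝ (Fin n)} (hx : x ∈ s) :
    grad (fun z => v z - u z) x = grad v x - grad u x := by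
  have hu' := (hu.differentiableOn one_ne_zero).differentiableAt (hs.mem_nhds hx)
  have hv' : DifferentiableAt ℝ v x := by
    rw [show v = (fun z => v z - u z) + u by ext z; simp]
    exact (hvu.differentiable one_ne_zero x).add hu'
  exact grad_sub hv' hu'

theorem ContDiff.continuous_grad {w : EuclideanSpace ℝ (Fin n) → ℝ} (hw : ContDiff ℝ 1 w) :
    Continuous (grad w) :=
  continuous_pi fun _ => (hw.continuous_fderiv one_ne_zero).clm_apply continuous_const

theorem hasCompactSupport_grad {w : EuclideanSpace ℝ (Fin n) → ℝ} (hw : HasCompactSupport w) :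
    HasCompactSupport (grad w) :=
  have hgrad : grad w = (fun L (i : Fin n) => L (EuclideanSpace.single i 1)) ∘ fderiv ℝ w := rfl
  hgrad ▸ (hw.fderiv ℝ).comp_left (by ext; simp)

theorem integrable_vnorm_grad_sq {μ : Measure (EuclideanSpace ℝ (Fin n))}
    [IsFiniteMeasureOnCompacts μ] {w : EuclideanSpace ℝ (Fin n) → ℝ} (hw : ContDiff ℝ 1 w)
    (hwc : HasCompactSupport w) : Integrable (fun x => vnorm (grad w x) ^ 2) μ := by
  have hcont : Continuous fun x => vnorm (grad w x) ^ 2 :=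
    (continuous_vnorm.comp hw.continuous_grad).pow 2
  have hsupp : HasCompactSupport fun x => vnorm (grad w x) ^ 2 :=
    (hasCompactSupport_grad hwc).comp_left (g := fun v => vnorm v ^ 2) (by simp [vnorm])
  exact hcont.integrable_of_hasCompactSupport hsupp

end Gradient

section Holder

variable {α : Type*} [MeasurableSpace α] {μ : Measure α}

theorem ofReal_eq_ofReal_rpow_rpow_inv {x p : ℝ} (hx : 0 ≤ x) (hp : 0 < p) :
    ENNReal.ofReal x = ENNReal.ofReal (x ^ p) ^ (1 / p) := by
  rw [ENNReal.ofReal_rpow_of_nonneg (by positivity) (by positivity), one_div,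
    Real.rpow_rpow_inv hx hp.ne']

theorem lintegral_ofReal_rpow {f : α → ℝ} {p : ℝ} (hf : ∀ x, 0 ≤ f x)
    (hfp : Integrable (fun x => f x ^ p) μ) :
    ∫⁻ x, ENNReal.ofReal (f x ^ p) ∂μ = ENNReal.ofReal (∫ x, f x ^ p ∂μ) :=
  (ofReal_integral_eq_lintegral_ofReal hfp (ae_of_all _ fun x => Real.rpow_nonneg (hf x) p)).symm

theorem lintegral_ofReal_mul_mul_le {f g h : α → ℝ} {p q s : ℝ} (hp : 0 < p) (hq : 0 < q)
    (hs : 0 < s) (hpqs : 1 / p + 1 / q + 1 / s = 1)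
    (hf : ∀ x, 0 ≤ f x) (hg : ∀ x, 0 ≤ g x) (hh : ∀ x, 0 ≤ h x)
    (hfp : Integrable (fun x => f x ^ p) μ) (hgq : Integrable (fun x => g x ^ q) μ)
    (hhs : Integrable (fun x => h x ^ s) μ) :
    ∫⁻ x, ENNReal.ofReal (f x * g x * h x) ∂μ ≤
      ENNReal.ofReal ((∫ x, f x ^ p ∂μ) ^ (1 / p) * (∫ x, g x ^ q ∂μ) ^ (1 / q) *
        (∫ x, h x ^ s ∂μ) ^ (1 / s)) := by
  have key := ENNReal.lintegral_prod_norm_pow_le (μ := μ) Finset.univ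
    (f := ![fun x => ENNReal.ofReal (f x ^ p), fun x => ENNReal.ofReal (g x ^ q),
      fun x => ENNReal.ofReal (h x ^ s)]) (p := ![1 / p, 1 / q, 1 / s])
    (fun i _ => by
      fin_cases i
      exacts [hfp.aemeasurable.ennreal_ofReal, hgq.aemeasurable.ennreal_ofReal,
        hhs.aemeasurable.ennreal_ofReal])
    (by simpa [Fin.sum_univ_three] using hpqs)
    (fun i _ => by fin_cases i <;> simp <;> positivity)
  simp only [Fin.prod_univ_three, Matrix.cons_val_zero, Matrix.cons_val_one,
    Matrix.cons_val_two, Matrix.tail_cons, Matrix.head_cons, lintegral_ofReal_rpow hf hfp,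
    lintegral_ofReal_rpow hg hgq, lintegral_ofReal_rpow hh hhs] at key
  have hfp' : 0 ≤ ∫ x, f x ^ p ∂μ := integral_nonneg fun x => Real.rpow_nonneg (hf x) p
  have hgq' : 0 ≤ ∫ x, g x ^ q ∂μ := integral_nonneg fun x => Real.rpow_nonneg (hg x) q
  have hhs' : 0 ≤ ∫ x, h x ^ s ∂μ := integral_nonneg fun x => Real.rpow_nonneg (hh x) s
  calc ∫⁻ x, ENNReal.ofReal (f x * g x * h x) ∂μ
      = ∫⁻ x, ENNReal.ofReal (f x ^ p) ^ (1 / p) * ENNReal.ofReal (g x ^ q) ^ (1 / q) *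
          ENNReal.ofReal (h x ^ s) ^ (1 / s) ∂μ := by
        refine lintegral_congr fun x => ?_
        rw [ENNReal.ofReal_mul (mul_nonneg (hf x) (hg x)), ENNReal.ofReal_mul (hf x),
          ← ofReal_eq_ofReal_rpow_rpow_inv (hf x) hp, ← ofReal_eq_ofReal_rpow_rpow_inv (hg x) hq,
          ← ofReal_eq_ofReal_rpow_rpow_inv (hh x) hs]
    _ ≤ _ := key
    _ = _ := by
        rw [ENNReal.ofReal_mul (by positivity), ENNReal.ofReal_mul (by positivity),
          ENNReal.ofReal_rpow_of_nonneg hfp' (by positivity),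
          ENNReal.ofReal_rpow_of_nonneg hgq' (by positivity),
          ENNReal.ofReal_rpow_of_nonneg hhs' (by positivity)]

end Holder

section Energy

variable {α : Type*} [MeasurableSpace α] {μ : Measure α} {n : ℕ}

theorem abs_integral_dotp_matVec_le {M : α → Fin n → Fin n → ℝ} {v g : α → Fin n → ℝ}
    {p q s : ℝ} (hp : 0 < p) (hq : 0 < q) (hs : 0 < s) (hpqs : 1 / p + 1 / q + 1 / s = 1)
    (hM : Integrable (fun x => mnorm (M x) ^ p) μ) (hv : Integrable (fun x => vnorm (v x) ^ q) μ)
    (hg : Integrable (fun x => vnorm (g x) ^ s) μ) :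
    |∫ x, dotp (matVec (M x) (v x)) (g x) ∂μ| ≤
      (∫ x, mnorm (M x) ^ p ∂μ) ^ (1 / p) * (∫ x, vnorm (v x) ^ q ∂μ) ^ (1 / q) *
        (∫ x, vnorm (g x) ^ s ∂μ) ^ (1 / s) := by
  have hRHS : 0 ≤ (∫ x, mnorm (M x) ^ p ∂μ) ^ (1 / p) * (∫ x, vnorm (v x) ^ q ∂μ) ^ (1 / q) *
      (∫ x, vnorm (g x) ^ s ∂μ) ^ (1 / s) := by
    have hM : 0 ≤ ∫ x, mnorm (M x) ^ p ∂μ :=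
      integral_nonneg fun x => Real.rpow_nonneg (mnorm_nonneg (M x)) p
    have hv : 0 ≤ ∫ x, vnorm (v x) ^ q ∂μ :=
      integral_nonneg fun x => Real.rpow_nonneg (vnorm_nonneg (v x)) q
    have hg : 0 ≤ ∫ x, vnorm (g x) ^ s ∂μ :=
      integral_nonneg fun x => Real.rpow_nonneg (vnorm_nonneg (g x)) s
    positivity
  rw [← ENNReal.ofReal_le_ofReal_iff hRHS, ← Real.enorm_eq_ofReal_abs]
  calc ‖∫ x, dotp (matVec (M x) (v x)) (g x) ∂μ‖ₑ
      ≤ ∫⁻ x, ‖dotp (matVec (M x) (v x)) (g x)‖ₑ ∂μ := enorm_integral_le_lintegral_enorm _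
    _ ≤ ∫⁻ x, ENNReal.ofReal (mnorm (M x) * vnorm (v x) * vnorm (g x)) ∂μ :=
        lintegral_mono fun x => by
          rw [Real.enorm_eq_ofReal_abs]
          exact ENNReal.ofReal_le_ofReal (abs_dotp_matVec_le _ _ _)
    _ ≤ _ := lintegral_ofReal_mul_mul_le hp hq hs hpqs (fun x => mnorm_nonneg _)
        (fun x => vnorm_nonneg _) (fun x => vnorm_nonneg _) hM hv hg

theorem mul_integral_vnorm_sq_le {A : α → Fin n → Fin n → ℝ} {g : α → Fin n → ℝ} {lam : ℝ}
    (hell : ∀ᵐ x ∂μ, ∀ ξ : Fin n → ℝ, lam * ∑ i, ξ i ^ 2 ≤ dotp ξ (matVec (A x) ξ))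
    (hg : Integrable (fun x => vnorm (g x) ^ 2) μ)
    (hAg : Integrable (fun x => dotp (matVec (A x) (g x)) (g x)) μ) :
    lam * ∫ x, vnorm (g x) ^ 2 ∂μ ≤ ∫ x, dotp (matVec (A x) (g x)) (g x) ∂μ := by
  rw [← integral_const_mul]
  refine integral_mono_ae (hg.const_mul lam) hAg (hell.mono fun x hx => ?_)
  simpa only [vnorm_sq, dotp_comm] using hx (g x)

theorem mul_integral_vnorm_sq_le_of_weak_solutions {A Ah : α → Fin n → Fin n → ℝ}
    {v vh w : α → Fin n → ℝ} {lam : ℝ}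
    (hell : ∀ᵐ x ∂μ, ∀ ξ : Fin n → ℝ, lam * ∑ i, ξ i ^ 2 ≤ dotp ξ (matVec (Ah x) ξ))
    (hw : Integrable (fun x => vnorm (w x) ^ 2) μ) (hvw : ∀ᵐ x ∂μ, w x = vh x - v x)
    (h₁ : Integrable (fun x => dotp (matVec (Ah x) (vh x)) (w x)) μ)
    (h₂ : Integrable (fun x => dotp (matVec (Ah x) (v x)) (w x)) μ)
    (h₃ : Integrable (fun x => dotp (matVec (A x) (v x)) (w x)) μ)
    (hsol : ∫ x, dotp (matVec (A x) (v x)) (w x) ∂μ = 0)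
    (hsolh : ∫ x, dotp (matVec (Ah x) (vh x)) (w x) ∂μ = 0) :
    lam * ∫ x, vnorm (w x) ^ 2 ∂μ ≤ -∫ x, dotp (matVec (Ah x - A x) (v x)) (w x) ∂μ := by
  have hAw : (fun x => dotp (matVec (Ah x) (vh x)) (w x) - dotp (matVec (Ah x) (v x)) (w x))
      =ᵐ[μ] fun x => dotp (matVec (Ah x) (w x)) (w x) :=
    hvw.mono fun x hx => by dsimp only; rw [← sub_dotp, ← matVec_sub, ← hx]
  have hdiff : ∫ x, dotp (matVec (Ah x - A x) (v x)) (w x) ∂μ =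
      (∫ x, dotp (matVec (Ah x) (v x)) (w x) ∂μ) - ∫ x, dotp (matVec (A x) (v x)) (w x) ∂μ := by
    rw [← integral_sub h₂ h₃]
    simp only [sub_matVec, sub_dotp]
  calc lam * ∫ x, vnorm (w x) ^ 2 ∂μ
      ≤ ∫ x, dotp (matVec (Ah x) (w x)) (w x) ∂μ :=
        mul_integral_vnorm_sq_le hell hw ((h₁.sub h₂).congr hAw)
    _ = (∫ x, dotp (matVec (Ah x) (vh x)) (w x) ∂μ) - ∫ x, dotp (matVec (Ah x) (v x)) (w x) ∂μ :=
        by rw [← integral_sub h₁ h₂, integral_congr_ae hAw]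
    _ = -∫ x, dotp (matVec (Ah x - A x) (v x)) (w x) ∂μ := by
        rw [hdiff, hsol, hsolh]
        ring

end Energy

theorem rpow_half_le_inv_mul_of_mul_le {lam E C : ℝ} (hlam : 0 < lam) (hE : 0 ≤ E) (hC : 0 ≤ C)
    (h : lam * E ≤ C * E ^ (1 / 2 : ℝ)) : E ^ (1 / 2 : ℝ) ≤ lam⁻¹ * C := by
  rw [← Real.sqrt_eq_rpow] at h ⊢
  rw [le_inv_mul_iff₀ hlam]
  have h' : lam * √E * √E ≤ C * √E := by rwa [mul_assoc, Real.mul_self_sqrt hE]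
  by_contra! hlt
  nlinarith [mul_pos (hC.trans_lt hlt) (sub_pos.2 hlt), mul_le_mul_of_nonneg_left h' hlam.le]

theorem statement8_general
    (n : ℕ) (x₀ : EuclideanSpace ℝ (Fin n)) (R : ℝ)
    (lam : ℝ) (hlam : 0 < lam) (r : ℝ) (hr : 2 < r)
    (Ah A₁ : EuclideanSpace ℝ (Fin n) → Fin n → Fin n → ℝ)
    (hell : ∀ᵐ Y ∂(volume.restrict (ball x₀ R)), ∀ ξ : Fin n → ℝ,
      lam * ∑ i, ξ i ^ 2 ≤ dotp ξ (matVec (Ah Y) ξ))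
    (hLr : IntegrableOn (fun Y => mnorm (Ah Y - A₁ Y) ^ r) (ball x₀ R) volume)
    (u uh : EuclideanSpace ℝ (Fin n) → ℝ)
    (hu : ContDiffOn ℝ 1 u (ball x₀ R))
    (hgradu : IntegrableOn (fun Y => vnorm (grad u Y) ^ (2 * r / (r - 2)))
      (ball x₀ R) volume)
    (hw : ContDiff ℝ 1 (fun Y => uh Y - u Y))
    (hwc : HasCompactSupport (fun Y => uh Y - u Y))
    (hws : tsupport (fun Y => uh Y - u Y) ⊆ ball x₀ R)
    (hsol₁ : ∀ ϕ : EuclideanSpace ℝ (Fin n) → ℝ, ContDiff ℝ 1 ϕ → HasCompactSupport ϕ →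
      tsupport ϕ ⊆ ball x₀ R →
      ∫ Y in ball x₀ R, dotp (matVec (A₁ Y) (grad u Y)) (grad ϕ Y) = 0)
    (hsolhat : ∀ ϕ : EuclideanSpace ℝ (Fin n) → ℝ, ContDiff ℝ 1 ϕ → HasCompactSupport ϕ →
      tsupport ϕ ⊆ ball x₀ R →
      ∫ Y in ball x₀ R, dotp (matVec (Ah Y) (grad uh Y)) (grad ϕ Y) = 0)
    (hint1 : IntegrableOn
      (fun Y => dotp (matVec (Ah Y) (grad uh Y)) (grad (fun z => uh z - u z) Y))
      (ball x₀ R) volume)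
    (hint2 : IntegrableOn
      (fun Y => dotp (matVec (Ah Y) (grad u Y)) (grad (fun z => uh z - u z) Y))
      (ball x₀ R) volume)
    (hint3 : IntegrableOn
      (fun Y => dotp (matVec (A₁ Y) (grad u Y)) (grad (fun z => uh z - u z) Y))
      (ball x₀ R) volume) :
    (∫ Y in ball x₀ R, vnorm (grad (fun z => uh z - u z) Y) ^ 2) ^ (1 / 2 : ℝ) ≤
      lam⁻¹ * (∫ Y in ball x₀ R, mnorm (Ah Y - A₁ Y) ^ r) ^ (1 / r) *
        (∫ Y in ball x₀ R, vnorm (grad u Y) ^ (2 * r / (r - 2))) ^ ((r - 2) / (2 * r)) := by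
  set w := fun z => uh z - u z
  have hgrad : ∀ᵐ Y ∂(volume.restrict (ball x₀ R)), grad w Y = grad uh Y - grad u Y :=
    (ae_restrict_iff' measurableSet_ball).2 <|
      ae_of_all _ fun Y hY => grad_sub_of_contDiffOn isOpen_ball hu hw hY
  have hE : IntegrableOn (fun Y => vnorm (grad w Y) ^ 2) (ball x₀ R) :=
    (integrable_vnorm_grad_sq hw hwc).integrableOn
  have henergy := mul_integral_vnorm_sq_le_of_weak_solutions hell hE hgrad hint1 hint2 hint3
    (hsol₁ w hw hwc hws) (hsolhat w hw hwc hws)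
  have hholder := abs_integral_dotp_matVec_le (μ := volume.restrict (ball x₀ R))
    (by linarith : 0 < r) (by have := sub_pos.2 hr; positivity) two_pos (by field_simp; ring)
    hLr hgradu (by simpa only [Real.rpow_two, IntegrableOn] using hE)
  simp only [Real.rpow_two, one_div_div] at hholder
  have hC : 0 ≤ (∫ Y in ball x₀ R, mnorm (Ah Y - A₁ Y) ^ r) ^ (1 / r) *
      (∫ Y in ball x₀ R, vnorm (grad u Y) ^ (2 * r / (r - 2))) ^ ((r - 2) / (2 * r)) :=
    mul_nonneg
      (Real.rpow_nonneg (setIntegral_nonneg measurableSet_ball fun _ _ =>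
        Real.rpow_nonneg (mnorm_nonneg _) r) _)
      (Real.rpow_nonneg (setIntegral_nonneg measurableSet_ball fun _ _ =>
        Real.rpow_nonneg (vnorm_nonneg _) _) _)
  refine (rpow_half_le_inv_mul_of_mul_le hlam
    (setIntegral_nonneg measurableSet_ball fun _ _ => sq_nonneg _) hC ?_).trans_eq
    (mul_assoc _ _ _).symm
  exact henergy.trans ((neg_le_abs _).trans hholder)

/-- energy estimate for the difference of the solutions `uh` and `u` of the
two operators `Ah` and `A₁` on a ball `B`:
`‖∇(uh − u)‖_{L²(B)} ≤ λ₀⁻¹ ‖Ah − A₁‖_{L^r(B)} ‖∇u‖_{L^{2r/(r−2)}(B)}`. -/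
theorem statement8
    (n : ℕ) (hn : 1 ≤ n) (x₀ : EuclideanSpace ℝ (Fin n)) (R : ℝ) (hR : 0 < R)
    (lam : ℝ) (hlam : 0 < lam) (r : ℝ) (hr : 2 < r)
    (Ah A₁ : EuclideanSpace ℝ (Fin n) → Fin n → Fin n → ℝ)
    (hAhm : AEStronglyMeasurable Ah (volume.restrict (ball x₀ R)))
    (hA₁m : AEStronglyMeasurable A₁ (volume.restrict (ball x₀ R)))
    (hell : ∀ᵐ Y ∂(volume.restrict (ball x₀ R)), ∀ ξ : Fin n → ℝ,
      lam * ∑ i, ξ i ^ 2 ≤ dotp ξ (matVec (Ah Y) ξ))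
    (hLr : IntegrableOn (fun Y => mnorm (Ah Y - A₁ Y) ^ r) (ball x₀ R) volume)
    (u uh : EuclideanSpace ℝ (Fin n) → ℝ)
    (hu : ContDiffOn ℝ 1 u (ball x₀ R)) (huh : ContDiffOn ℝ 1 uh (ball x₀ R))
    (hgradu : IntegrableOn (fun Y => vnorm (grad u Y) ^ (2 * r / (r - 2)))
      (ball x₀ R) volume)
    (hw : ContDiff ℝ 1 (fun Y => uh Y - u Y))
    (hwc : HasCompactSupport (fun Y => uh Y - u Y))
    (hws : tsupport (fun Y => uh Y - u Y) ⊆ ball x₀ R)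
    (hsol₁ : ∀ ϕ : EuclideanSpace ℝ (Fin n) → ℝ, ContDiff ℝ 1 ϕ → HasCompactSupport ϕ →
      tsupport ϕ ⊆ ball x₀ R →
      ∫ Y in ball x₀ R, dotp (matVec (A₁ Y) (grad u Y)) (grad ϕ Y) = 0)
    (hsolhat : ∀ ϕ : EuclideanSpace ℝ (Fin n) → ℝ, ContDiff ℝ 1 ϕ → HasCompactSupport ϕ →
      tsupport ϕ ⊆ ball x₀ R →
      ∫ Y in ball x₀ R, dotp (matVec (Ah Y) (grad uh Y)) (grad ϕ Y) = 0)
    (hint1 : IntegrableOn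
      (fun Y => dotp (matVec (Ah Y) (grad uh Y)) (grad (fun z => uh z - u z) Y))
      (ball x₀ R) volume)
    (hint2 : IntegrableOn
      (fun Y => dotp (matVec (Ah Y) (grad u Y)) (grad (fun z => uh z - u z) Y))
      (ball x₀ R) volume)
    (hint3 : IntegrableOn
      (fun Y => dotp (matVec (A₁ Y) (grad u Y)) (grad (fun z => uh z - u z) Y))
      (ball x₀ R) volume) :
    (∫ Y in ball x₀ R, vnorm (grad (fun z => uh z - u z) Y) ^ 2) ^ (1 / 2 : ℝ) ≤
      lam⁻¹ * (∫ Y in ball x₀ R, mnorm (Ah Y - A₁ Y) ^ r) ^ (1 / r) *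
        (∫ Y in ball x₀ R, vnorm (grad u Y) ^ (2 * r / (r - 2))) ^ ((r - 2) / (2 * r)) :=
  statement8_general n x₀ R lam hlam r hr Ah A₁ hell hLr u uh hu hgradu hw hwc hws hsol₁ hsolhat
    hint1 hint2 hint3
end
end

section
/- Let (X, 𝔐, μ) be a measure space, let S, h : X → [0,∞] be measurable, and let q ∈ (0,∞), η > 0, C > 0. Assume ∫ S^q dμ < ∞ and that the good-λ inequality μ({S > 2λ} ∩ {h ≤ γ²λ²}) ≤ C γ^η μ({S > λ}) holds for every γ ∈ (0,1) and every λ > 0. Then there exists a constant C', depending only on q, η and C, such that ∫ S^q dμ ≤ C' ∫ h^{q/2} dμ. -/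
/-!
Splitting `{S > 2λ}` according to whether `h ≤ γ²λ²` or not, the good-λ inequality bounds the
distribution function of `S` at level `2λ` by `Cγ^η` times that of `S` at level `λ` plus that of
`√h / γ` at level `λ`. Integrating against `q λ^(q-1) dλ` (layer cake) gives
`∫ S^q ≤ 2^q C γ^η ∫ S^q + (2/γ)^q ∫ h^(q/2)`; for `γ` so small that `2^q C γ^η ≤ 1/2` the first
term is absorbed into the left-hand side, which is legitimate because `∫ S^q < ∞`.
-/

open MeasureTheory Set
open scoped ENNReal

section

variable {α : Type*} [MeasurableSpace α] {μ : Measure α}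

theorem lintegral_rpow_eq_lintegral_meas_ofReal_lt_mul {f : α → ℝ≥0∞}
    (hf : AEMeasurable f μ) (hf_fin : ∀ᵐ x ∂μ, f x ≠ ∞) {p : ℝ} (hp : 0 < p) :
    ∫⁻ x, f x ^ p ∂μ =
      ENNReal.ofReal p *
        ∫⁻ t in Ioi 0, μ {x | ENNReal.ofReal t < f x} * ENNReal.ofReal (t ^ (p - 1)) := by
  have hlhs : ∫⁻ x, f x ^ p ∂μ = ∫⁻ x, ENNReal.ofReal ((f x).toReal ^ p) ∂μ := by
    refine lintegral_congr_ae ?_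
    filter_upwards [hf_fin] with x hx
    rw [ENNReal.toReal_rpow, ENNReal.ofReal_toReal (ENNReal.rpow_ne_top_of_nonneg hp.le hx)]
  have hlevel (t : ℝ) (ht : 0 ≤ t) :
      μ {x | ENNReal.ofReal t < f x} = μ {x | t < (f x).toReal} := by
    refine measure_congr ?_
    filter_upwards [hf_fin] with x hx
    exact propext (ENNReal.ofReal_lt_iff_lt_toReal ht hx)
  rw [hlhs, lintegral_rpow_eq_lintegral_meas_lt_mul μ
    (.of_forall fun _ => ENNReal.toReal_nonneg) hf.ennreal_toReal hp]
  congr 1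
  exact setLIntegral_congr_fun measurableSet_Ioi fun t ht => by rw [hlevel t (le_of_lt ht)]

theorem lintegral_rpow_le_of_meas_lt_le {f g k : α → ℝ≥0∞} {p : ℝ} (hp : 0 < p)
    (hf : AEMeasurable f μ) (hg : AEMeasurable g μ) (hk : AEMeasurable k μ)
    (hf_fin : ∀ᵐ x ∂μ, f x ≠ ∞) (hg_fin : ∀ᵐ x ∂μ, g x ≠ ∞) (hk_fin : ∀ᵐ x ∂μ, k x ≠ ∞)
    {c : ℝ≥0∞} (hc : c ≠ ∞)
    (hfgk : ∀ t : ℝ, 0 < t → μ {x | ENNReal.ofReal t < f x} ≤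
      c * μ {x | ENNReal.ofReal t < g x} + μ {x | ENNReal.ofReal t < k x}) :
    ∫⁻ x, f x ^ p ∂μ ≤ c * ∫⁻ x, g x ^ p ∂μ + ∫⁻ x, k x ^ p ∂μ := by
  have hmeas (u : α → ℝ≥0∞) : Measurable fun t : ℝ => μ {x | ENNReal.ofReal t < u x} :=
    Antitone.measurable fun s t hst => measure_mono fun x hx =>
      (ENNReal.ofReal_le_ofReal hst).trans_lt hx
  have hw : Measurable fun t : ℝ => ENNReal.ofReal (t ^ (p - 1)) :=
    (measurable_id.pow_const _).ennreal_ofReal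
  rw [lintegral_rpow_eq_lintegral_meas_ofReal_lt_mul hf hf_fin hp,
    lintegral_rpow_eq_lintegral_meas_ofReal_lt_mul hg hg_fin hp,
    lintegral_rpow_eq_lintegral_meas_ofReal_lt_mul hk hk_fin hp]
  calc _ ≤ ENNReal.ofReal p * ∫⁻ t in Ioi 0, (c * (μ {x | ENNReal.ofReal t < g x} *
          ENNReal.ofReal (t ^ (p - 1))) + μ {x | ENNReal.ofReal t < k x} *
          ENNReal.ofReal (t ^ (p - 1))) := by
        gcongr ENNReal.ofReal p * ?_
        refine setLIntegral_mono' (measurableSet_Ioi (a := (0 : ℝ))) fun t ht => ?_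
        rw [← mul_assoc, ← add_mul]
        gcongr
        exact hfgk t ht
    _ = _ := by
        have hgw : Measurable fun t : ℝ =>
            c * (μ {x | ENNReal.ofReal t < g x} * ENNReal.ofReal (t ^ (p - 1))) :=
          ((hmeas g).mul hw).const_mul c
        rw [lintegral_add_left hgw, lintegral_const_mul' _ _ hc]
        ring

theorem ae_ne_top_of_lintegral_rpow_ne_top {f : α → ℝ≥0∞} (hf : AEMeasurable f μ) {p : ℝ}
    (hp : 0 < p) (hfp : ∫⁻ x, f x ^ p ∂μ ≠ ∞) : ∀ᵐ x ∂μ, f x ≠ ∞ := by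
  filter_upwards [ae_lt_top' (hf.pow_const p) hfp] with x hx hx_top
  rw [hx_top, ENNReal.top_rpow_of_pos hp] at hx
  exact lt_irrefl _ hx

theorem lintegral_const_mul_rpow {f : α → ℝ≥0∞} (hf : AEMeasurable f μ) (c : ℝ≥0∞) {p : ℝ}
    (hp : 0 ≤ p) : ∫⁻ x, (c * f x) ^ p ∂μ = c ^ p * ∫⁻ x, f x ^ p ∂μ := by
  simp_rw [ENNReal.mul_rpow_of_nonneg _ _ hp]
  exact lintegral_const_mul'' _ (hf.pow_const p)

theorem ENNReal.ofReal_lt_ofReal_mul_iff {c t : ℝ} (hc : 0 < c) {v : ℝ≥0∞} :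
    ENNReal.ofReal t < ENNReal.ofReal c * v ↔ ENNReal.ofReal (t / c) < v := by
  nth_rewrite 1 [← mul_div_cancel₀ t hc.ne']
  rw [ENNReal.ofReal_mul hc.le,
    (ENNReal.mul_right_strictMono (ENNReal.ofReal_pos.mpr hc).ne' ENNReal.ofReal_ne_top).lt_iff_lt]

theorem meas_lt_le_of_goodLambda {S h : α → ℝ≥0∞} {γ ε : ℝ} (hγ : 0 < γ)
    (hgood : ∀ lam : ℝ, 0 < lam →
      μ ({x | ENNReal.ofReal (2 * lam) < S x} ∩ {x | h x ≤ ENNReal.ofReal (γ ^ 2 * lam ^ 2)}) ≤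
        ENNReal.ofReal ε * μ {x | ENNReal.ofReal lam < S x})
    {t : ℝ} (ht : 0 < t) :
    μ {x | ENNReal.ofReal t < S x} ≤ ENNReal.ofReal ε * μ {x | ENNReal.ofReal t < 2 * S x} +
      μ {x | ENNReal.ofReal t < ENNReal.ofReal (2 / γ) * h x ^ (2⁻¹ : ℝ)} := by
  have hS : {x | ENNReal.ofReal t < 2 * S x} = {x | ENNReal.ofReal (t / 2) < S x} := by
    ext x
    show ENNReal.ofReal t < 2 * S x ↔ ENNReal.ofReal (t / 2) < S x
    rw [← ENNReal.ofReal_ofNat 2, ENNReal.ofReal_lt_ofReal_mul_iff two_pos]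
  have hh (x : α) (hx : ENNReal.ofReal (γ ^ 2 * (t / 2) ^ 2) < h x) :
      ENNReal.ofReal t < ENNReal.ofReal (2 / γ) * h x ^ (2⁻¹ : ℝ) := by
    have hlevel : (t / (2 / γ)) ^ (2 : ℝ) = γ ^ 2 * (t / 2) ^ 2 := by
      rw [Real.rpow_two]
      field_simp
    rwa [ENNReal.ofReal_lt_ofReal_mul_iff (by positivity), ENNReal.lt_rpow_inv_iff two_pos,
      ENNReal.ofReal_rpow_of_nonneg (by positivity) two_pos.le, hlevel]
  calc μ {x | ENNReal.ofReal t < S x}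
      = μ {x | ENNReal.ofReal (2 * (t / 2)) < S x} := by rw [mul_div_cancel₀ _ two_ne_zero]
    _ ≤ μ ({x | ENNReal.ofReal (2 * (t / 2)) < S x} ∩
          {x | h x ≤ ENNReal.ofReal (γ ^ 2 * (t / 2) ^ 2)}) +
        μ ({x | ENNReal.ofReal (2 * (t / 2)) < S x} \
          {x | h x ≤ ENNReal.ofReal (γ ^ 2 * (t / 2) ^ 2)}) := measure_le_inter_add_sdiff _ _ _
    _ ≤ _ := by
        rw [hS]
        gcongr
        · exact hgood _ (half_pos ht)
        · exact fun x hx => hh x (lt_of_not_ge hx.2)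

theorem lintegral_rpow_le_of_goodLambda {S h : α → ℝ≥0∞} (hS : Measurable S) (hh : Measurable h)
    (hS_fin : ∀ᵐ x ∂μ, S x ≠ ∞) (hh_fin : ∀ᵐ x ∂μ, h x ≠ ∞) {q γ ε : ℝ} (hq : 0 < q)
    (hγ : 0 < γ)
    (hgood : ∀ lam : ℝ, 0 < lam →
      μ ({x | ENNReal.ofReal (2 * lam) < S x} ∩ {x | h x ≤ ENNReal.ofReal (γ ^ 2 * lam ^ 2)}) ≤
        ENNReal.ofReal ε * μ {x | ENNReal.ofReal lam < S x}) :
    ∫⁻ x, S x ^ q ∂μ ≤ ENNReal.ofReal ε * 2 ^ q * ∫⁻ x, S x ^ q ∂μ +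
      ENNReal.ofReal (2 / γ) ^ q * ∫⁻ x, h x ^ (q / 2) ∂μ := by
  have hdist := lintegral_rpow_le_of_meas_lt_le hq hS.aemeasurable
    (hS.const_mul 2).aemeasurable ((hh.pow_const (2⁻¹ : ℝ)).const_mul _).aemeasurable hS_fin
    (hS_fin.mono fun x hx => ENNReal.mul_ne_top ENNReal.ofNat_ne_top hx)
    (hh_fin.mono fun x hx => ENNReal.mul_ne_top ENNReal.ofReal_ne_top
      (ENNReal.rpow_ne_top_of_nonneg (by norm_num) hx))
    ENNReal.ofReal_ne_top fun t ht => meas_lt_le_of_goodLambda hγ hgood ht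
  rw [lintegral_const_mul_rpow hS.aemeasurable _ hq.le,
    lintegral_const_mul_rpow (hh.pow_const _).aemeasurable _ hq.le, ← mul_assoc] at hdist
  simp_rw [← ENNReal.rpow_mul, inv_mul_eq_div] at hdist
  exact hdist

end

theorem ENNReal.le_two_mul_of_le_mul_add {a b c : ℝ≥0∞} (ha : a ≠ ∞) (hb : b ≤ 2⁻¹)
    (h : a ≤ b * a + c) : a ≤ 2 * c := by
  refine (ENNReal.add_le_add_iff_left ha).mp ?_
  calc a + a = 2 * a := (two_mul a).symm
    _ ≤ 2 * (b * a + c) := by gcongr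
    _ = 2 * b * a + 2 * c := by ring
    _ ≤ 1 * a + 2 * c := by
        gcongr
        calc 2 * b ≤ 2 * 2⁻¹ := by gcongr
          _ = 1 := ENNReal.mul_inv_cancel two_ne_zero ENNReal.ofNat_ne_top
    _ = a + 2 * c := by rw [one_mul]

open Filter Topology in
theorem exists_pos_lt_one_mul_rpow_le (C : ℝ) {η δ : ℝ} (hη : 0 < η) (hδ : 0 < δ) :
    ∃ γ : ℝ, 0 < γ ∧ γ < 1 ∧ C * γ ^ η ≤ δ := by
  have hlim : Tendsto (fun γ : ℝ => C * γ ^ η) (𝓝[>] 0) (𝓝 0) := by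
    have := ((Real.continuousAt_rpow_const 0 η (Or.inr hη.le)).tendsto.const_mul C).mono_left
      (nhdsWithin_le_nhds (s := Ioi 0))
    rwa [Real.zero_rpow hη.ne', mul_zero] at this
  obtain ⟨γ, hγδ, hγ⟩ := ((hlim.eventually (ge_mem_nhds hδ)).and (Ioo_mem_nhdsGT one_pos)).exists
  exact ⟨γ, hγ.1, hγ.2, hγδ⟩

theorem statement10_general
    (q η C : ℝ) (hq : 0 < q) (hη : 0 < η) :
    ∃ C' : ℝ, 0 < C' ∧
      ∀ (X : Type) [MeasurableSpace X] (μ : Measure X) (S h : X → ℝ≥0∞),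
        Measurable S → Measurable h →
        (∫⁻ x, S x ^ q ∂μ) < ⊤ →
        (∀ γ : ℝ, 0 < γ → γ < 1 → ∀ lam : ℝ, 0 < lam →
          μ ({x | ENNReal.ofReal (2 * lam) < S x} ∩
              {x | h x ≤ ENNReal.ofReal (γ ^ 2 * lam ^ 2)}) ≤
            ENNReal.ofReal (C * γ ^ η) * μ {x | ENNReal.ofReal lam < S x}) →
        (∫⁻ x, S x ^ q ∂μ) ≤ ENNReal.ofReal C' * ∫⁻ x, h x ^ (q / 2) ∂μ := by
  obtain ⟨γ, hγ0, hγ1, hγε⟩ :=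
    exists_pos_lt_one_mul_rpow_le (C * 2 ^ q) hη (δ := 2⁻¹) (by norm_num)
  have hC'_pos : 0 < 2 * (2 / γ) ^ q := by positivity
  refine ⟨2 * (2 / γ) ^ q, hC'_pos, fun X _ μ S h hS hh hI hgood => ?_⟩
  by_cases hH : ∫⁻ x, h x ^ (q / 2) ∂μ = ∞
  · rw [hH, ENNReal.mul_top (ENNReal.ofReal_pos.mpr hC'_pos).ne']
    exact le_top
  have hS_fin := ae_ne_top_of_lintegral_rpow_ne_top hS.aemeasurable hq hI.ne
  have hh_fin := ae_ne_top_of_lintegral_rpow_ne_top hh.aemeasurable (half_pos hq) hH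
  have hsmall : ENNReal.ofReal (C * γ ^ η) * 2 ^ q ≤ 2⁻¹ :=
    calc ENNReal.ofReal (C * γ ^ η) * 2 ^ q = ENNReal.ofReal (C * γ ^ η * 2 ^ q) := by
          rw [ENNReal.ofReal_mul' (q := 2 ^ q) (by positivity),
            ← ENNReal.ofReal_rpow_of_pos two_pos, ENNReal.ofReal_ofNat]
      _ ≤ ENNReal.ofReal 2⁻¹ := ENNReal.ofReal_le_ofReal (by rwa [mul_right_comm] at hγε)
      _ = 2⁻¹ := by rw [ENNReal.ofReal_inv_of_pos two_pos, ENNReal.ofReal_ofNat]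
  calc ∫⁻ x, S x ^ q ∂μ ≤ 2 * (ENNReal.ofReal (2 / γ) ^ q * ∫⁻ x, h x ^ (q / 2) ∂μ) :=
        ENNReal.le_two_mul_of_le_mul_add hI.ne hsmall
          (lintegral_rpow_le_of_goodLambda hS hh hS_fin hh_fin hq hγ0 (hgood γ hγ0 hγ1))
    _ = ENNReal.ofReal (2 * (2 / γ) ^ q) * ∫⁻ x, h x ^ (q / 2) ∂μ := by
        rw [ENNReal.ofReal_mul two_pos.le, ENNReal.ofReal_rpow_of_pos (by positivity),
          ENNReal.ofReal_ofNat, mul_assoc]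

/-- the distribution-function (layer-cake) argument: a good-λ inequality
between `S` and `h`, together with `∫ S^q dμ < ∞`, yields
`∫ S^q dμ ≤ C' ∫ h^{q/2} dμ` with `C'` depending only on `q`, `η` and `C`. -/
theorem statement10
    (q η C : ℝ) (hq : 0 < q) (hη : 0 < η) (hC : 0 < C) :
    ∃ C' : ℝ, 0 < C' ∧
      ∀ (X : Type) [MeasurableSpace X] (μ : Measure X) (S h : X → ℝ≥0∞),
        Measurable S → Measurable h →
        (∫⁻ x, S x ^ q ∂μ) < ⊤ →
        (∀ γ : ℝ, 0 < γ → γ < 1 → ∀ lam : ℝ, 0 < lam →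
          μ ({x | ENNReal.ofReal (2 * lam) < S x} ∩
              {x | h x ≤ ENNReal.ofReal (γ ^ 2 * lam ^ 2)}) ≤
            ENNReal.ofReal (C * γ ^ η) * μ {x | ENNReal.ofReal lam < S x}) →
        (∫⁻ x, S x ^ q ∂μ) ≤ ENNReal.ofReal C' * ∫⁻ x, h x ^ (q / 2) ∂μ :=
  statement10_general q η C hq hη
end
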